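/- Let 0 ≤ β < 1 and R ≥ 1, and define K_R : (0,∞) → [0,∞) by K_R(x) = x^{1−2β} ∫_ℝ (t²+1)^{−β} χ_R(1/(x²(t²+1))) dt, where χ_R is the indicator of [R,∞). Then K_R(x) = 0 for all x > R^{−1/2}, K_R is Lebesgue integrable on (0,∞), and lim_{v→0⁺} v^{1/2} Σ_{c=1}^∞ K_R(c v^{1/2}) = ∫_0^∞ K_R(x) dx. -/

import Mathlib

open Filter Topology MeasureTheory

/-- `χ_R`, the indicator function of `[R,∞)`. -/
noncomputable def chiR (R x : ℝ) : ℝ := if R ≤ x then 1 else 0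

/-- `K_R(x) = x^{1−2β} ∫_ℝ (t²+1)^{−β} χ_R(1/(x²(t²+1))) dt`. -/
noncomputable def KR (β R x : ℝ) : ℝ :=
  x ^ (1 - 2 * β) * ∫ t : ℝ, ((t ^ 2 + 1) ^ (-β) * chiR R (1 / (x ^ 2 * (t ^ 2 + 1))))

open Set

namespace RSKR

noncomputable def Af (R t : ℝ) : ℝ := Real.sqrt (1 / (R * (t ^ 2 + 1)))

lemma sq1_pos (t : ℝ) : 0 < t ^ 2 + 1 := by positivity

lemma Af_pos {R : ℝ} (hR : 0 < R) (t : ℝ) : 0 < Af R t :=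
  Real.sqrt_pos.mpr (by positivity)

lemma Af_sq {R : ℝ} (hR : 0 < R) (t : ℝ) : (Af R t) ^ 2 = 1 / (R * (t ^ 2 + 1)) :=
  Real.sq_sqrt (by positivity)

lemma Rhalf_pos {R : ℝ} (hR : 1 ≤ R) : 0 < R ^ (-(1:ℝ)/2) :=
  Real.rpow_pos_of_pos (by linarith) _

lemma Rhalf_eq {R : ℝ} (hR : 1 ≤ R) : R ^ (-(1:ℝ)/2) = Real.sqrt (1 / R) := by
  rw [Real.sqrt_eq_rpow, one_div, ← Real.rpow_neg_one R, ← Real.rpow_mul (by linarith)]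
  norm_num

lemma Af_le_Rhalf {R : ℝ} (hR : 1 ≤ R) (t : ℝ) : Af R t ≤ R ^ (-(1:ℝ)/2) := by
  rw [Rhalf_eq hR]
  apply Real.sqrt_le_sqrt
  have h1 : 0 < R := by linarith
  rw [div_le_div_iff₀ (by positivity) h1]
  nlinarith [sq_nonneg t]

lemma Rhalf_le_one {R : ℝ} (hR : 1 ≤ R) : R ^ (-(1:ℝ)/2) ≤ 1 :=
  Real.rpow_le_one_of_one_le_of_nonpos hR (by norm_num)

lemma Af_le_one {R : ℝ} (hR : 1 ≤ R) (t : ℝ) : Af R t ≤ 1 :=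
  (Af_le_Rhalf hR t).trans (Rhalf_le_one hR)

lemma chi_iff {R x : ℝ} (hR : 0 < R) (hx : 0 < x) (t : ℝ) :
    R ≤ 1 / (x ^ 2 * (t ^ 2 + 1)) ↔ x ≤ Af R t := by
  have h1 : 0 < t ^ 2 + 1 := sq1_pos t
  rw [le_div_iff₀ (by positivity)]
  constructor
  · intro hle
    have h2 : x ^ 2 ≤ (Af R t) ^ 2 := by
      rw [Af_sq hR, le_div_iff₀ (by positivity)]; nlinarith
    nlinarith [Af_pos hR t, sq_nonneg (x - Af R t)]
  · intro hle
    have h2 : x ^ 2 ≤ (Af R t) ^ 2 := by nlinarith [Af_pos hR t]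
    rw [Af_sq hR, le_div_iff₀ (by positivity)] at h2
    nlinarith

lemma chi_eq {R x : ℝ} (hR : 0 < R) (hx : 0 < x) (t : ℝ) :
    chiR R (1 / (x ^ 2 * (t ^ 2 + 1))) = if x ≤ Af R t then 1 else 0 := by
  unfold chiR
  by_cases h : x ≤ Af R t
  · rw [if_pos ((chi_iff hR hx t).mpr h), if_pos h]
  · rw [if_neg (fun hc => h ((chi_iff hR hx t).mp hc)), if_neg h]

noncomputable def phi (β R x t : ℝ) : ℝ :=
  x ^ (1 - 2 * β) * ((t ^ 2 + 1) ^ (-β) * (if x ≤ Af R t then 1 else 0))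

lemma KR_eq {β R x : ℝ} (hR : 0 < R) (hx : 0 < x) :
    KR β R x = ∫ t : ℝ, phi β R x t := by
  unfold KR phi
  rw [integral_const_mul]
  congr 1
  apply integral_congr_ae
  filter_upwards with t
  rw [chi_eq hR hx t]

open intervalIntegral

lemma phi_ind (β R t : ℝ) :
    (fun x => phi β R x t)
      = fun x => (t ^ 2 + 1) ^ (-β) * (Set.Iic (Af R t)).indicator (fun x => x ^ (1 - 2*β)) x := by
  funext x
  unfold phi
  by_cases h : x ≤ Af R t <;> simp [Set.indicator_apply, h] <;> ring

lemma ioc_aux (a : ℝ) : Set.Iic a ∩ Ioi 0 = Ioc 0 a := by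
  ext y; simp [mem_Ioc, mem_Iic, mem_Ioi, and_comm]

lemma rpow_integrableOn_Ioc {β a : ℝ} (hβ1 : β < 1) (ha : 0 ≤ a) :
    IntegrableOn (fun x : ℝ => x ^ (1 - 2*β)) (Ioc 0 a) := by
  have := intervalIntegrable_rpow' (r := 1 - 2*β) (by linarith) (a := 0) (b := a)
  exact (intervalIntegrable_iff_integrableOn_Ioc_of_le ha).mp this

lemma phi_x_integrableOn {β R : ℝ} (hβ1 : β < 1) (hR : 0 < R) (t : ℝ) :
    IntegrableOn (fun x => phi β R x t) (Ioi 0) := by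
  rw [phi_ind]
  apply Integrable.const_mul
  refine (integrable_indicator_iff measurableSet_Iic).mpr ?_
  show Integrable _ ((volume.restrict (Ioi 0)).restrict (Set.Iic (Af R t)))
  rw [Measure.restrict_restrict measurableSet_Iic, ioc_aux]
  exact rpow_integrableOn_Ioc hβ1 (Af_pos hR t).le

noncomputable def psi (β R t : ℝ) : ℝ :=
  (t ^ 2 + 1) ^ (-β) * ((Af R t) ^ (2 - 2 * β) / (2 - 2 * β))

lemma phi_x_integral {β R : ℝ} (hβ1 : β < 1) (hR : 0 < R) (t : ℝ) :
    ∫ x in Ioi 0, phi β R x t = psi β R t := by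
  rw [phi_ind, MeasureTheory.integral_const_mul, setIntegral_indicator measurableSet_Iic]
  have h1 : Ioi 0 ∩ Set.Iic (Af R t) = Ioc 0 (Af R t) := by
    ext y; simp [mem_Ioc, mem_Iic, mem_Ioi]
  rw [h1, ← integral_of_le (Af_pos hR t).le,
    integral_rpow (Or.inl (by linarith : (-1:ℝ) < 1 - 2*β))]
  rw [Real.zero_rpow (by intro h; nlinarith : (1 - 2*β) + 1 ≠ 0)]
  unfold psi
  rw [show (1 - 2*β) + 1 = 2 - 2*β by ring, sub_zero]

lemma alg {β R : ℝ} (hR : 0 < R) (t : ℝ) :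
    (t ^ 2 + 1) ^ (-β) * (Af R t) ^ (2 - 2 * β) = R ^ (β - 1) * (t ^ 2 + 1)⁻¹ := by
  have h1 : (0:ℝ) < t ^ 2 + 1 := sq1_pos t
  have h2 : (0:ℝ) < R * (t ^ 2 + 1) := by positivity
  have e1 : Af R t ^ (2 - 2*β) = (R * (t ^ 2 + 1)) ^ (β - 1) := by
    unfold Af
    rw [Real.sqrt_eq_rpow, ← Real.rpow_mul (by positivity), one_div,
      ← Real.rpow_neg_one (R * (t ^ 2 + 1)), ← Real.rpow_mul h2.le]
    congr 1
    ring
  rw [e1, Real.mul_rpow hR.le h1.le, mul_left_comm, ← Real.rpow_add h1,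
    show -β + (β - 1) = (-1:ℝ) by ring, Real.rpow_neg_one]

lemma psi_eq {β R : ℝ} (hR : 0 < R) :
    psi β R = fun t => (R ^ (β - 1) / (2 - 2*β)) * (t ^ 2 + 1)⁻¹ := by
  funext t
  unfold psi
  calc (t ^ 2 + 1) ^ (-β) * ((Af R t) ^ (2 - 2*β) / (2 - 2*β))
      = ((t ^ 2 + 1) ^ (-β) * (Af R t) ^ (2 - 2*β)) / (2 - 2*β) := by ring
    _ = (R ^ (β - 1) * (t ^ 2 + 1)⁻¹) / (2 - 2*β) := by rw [alg hR t]
    _ = (R ^ (β - 1) / (2 - 2*β)) * (t ^ 2 + 1)⁻¹ := by ring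

lemma psi_integrable {β R : ℝ} (hR : 0 < R) : Integrable (psi β R) := by
  rw [psi_eq hR]
  apply Integrable.const_mul
  have h := integrable_inv_one_add_sq
  apply h.congr
  filter_upwards with t
  rw [add_comm]

lemma Af_continuous {R : ℝ} (hR : 0 < R) : Continuous (Af R) := by
  unfold Af
  apply Real.continuous_sqrt.comp
  exact Continuous.div continuous_const (by continuity) (fun t => by positivity)

lemma weight_continuous (β : ℝ) : Continuous fun t : ℝ => (t ^ 2 + 1) ^ (-β) := by
  apply Continuous.rpow_const (by continuity)
  exact fun t => Or.inl (ne_of_gt (sq1_pos t))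

lemma phi_prod_meas {β R : ℝ} (hR : 0 < R) :
    Measurable (fun p : ℝ × ℝ => phi β R p.1 p.2) := by
  unfold phi
  apply Measurable.mul
  · exact measurable_fst.pow measurable_const
  apply Measurable.mul
  · exact ((weight_continuous β).comp continuous_snd).measurable
  · have hs : MeasurableSet {p : ℝ × ℝ | p.1 ≤ Af R p.2} :=
      measurableSet_le measurable_fst ((Af_continuous hR).measurable.comp measurable_snd)
    exact Measurable.ite hs measurable_const measurable_const

lemma phi_t_meas {β R : ℝ} (hR : 0 < R) (x : ℝ) :
    Measurable (fun t => phi β R x t) :=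
  (phi_prod_meas (β := β) hR).comp (measurable_const.prodMk measurable_id)

lemma phi_nonneg {β R x t : ℝ} (hx : 0 ≤ x) : 0 ≤ phi β R x t := by
  unfold phi
  have := Real.rpow_nonneg hx (1 - 2*β)
  have := Real.rpow_nonneg (sq1_pos t).le (-β)
  positivity

lemma weight_le_one {β t : ℝ} (hβ0 : 0 ≤ β) : (t ^ 2 + 1) ^ (-β) ≤ 1 :=
  Real.rpow_le_one_of_one_le_of_nonpos (by nlinarith [sq_nonneg t]) (by linarith)

lemma phi_t_integrable {β R x : ℝ} (hβ0 : 0 ≤ β) (hR : 1 ≤ R) (hx : 0 < x) :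
    Integrable (fun t => phi β R x t) := by
  have hR0 : (0:ℝ) < R := by linarith
  set L := Real.sqrt (1 / (R * x ^ 2)) with hL
  apply Integrable.mono' (g := fun t => (Icc (-L) L).indicator (fun _ => x ^ (1 - 2*β)) t)
  · exact (integrable_indicator_iff measurableSet_Icc).mpr
      ((integrableOn_const_iff).mpr (Or.inr measure_Icc_lt_top))
  · exact (phi_t_meas hR0 x).aestronglyMeasurable
  · filter_upwards with t
    by_cases hct : x ≤ Af R t
    · have ht : t ∈ Icc (-L) L := by
        have h2 : x ^ 2 ≤ 1 / (R * (t ^ 2 + 1)) := by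
          rw [← Af_sq hR0 t]
          exact pow_le_pow_left₀ hx.le hct 2
        have h3 : t ^ 2 ≤ 1 / (R * x ^ 2) := by
          rw [le_div_iff₀ (by positivity)] at h2 ⊢
          nlinarith [sq1_pos t, sq_nonneg t]
        have h4 : |t| ≤ L := by
          rw [hL, ← Real.sqrt_sq_eq_abs]
          exact Real.sqrt_le_sqrt h3
        exact abs_le.mp h4
      rw [indicator_of_mem ht, Real.norm_of_nonneg (phi_nonneg hx.le)]
      unfold phi
      rw [if_pos hct, mul_one]
      exact mul_le_of_le_one_right (Real.rpow_nonneg hx.le _) (weight_le_one hβ0)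
    · unfold phi
      rw [if_neg hct, mul_zero, mul_zero, norm_zero]
      exact indicator_nonneg (fun y _ => Real.rpow_nonneg hx.le _) t

lemma phi_prod_integrable {β R : ℝ} (hβ1 : β < 1) (hR : 1 ≤ R) :
    Integrable (fun p : ℝ × ℝ => phi β R p.1 p.2) ((volume.restrict (Ioi 0)).prod volume) := by
  have hR0 : (0:ℝ) < R := by linarith
  rw [integrable_prod_iff' ((phi_prod_meas hR0).aestronglyMeasurable)]
  constructor
  · exact ae_of_all _ fun t => phi_x_integrableOn hβ1 hR0 t
  · have he : (fun t => ∫ x in Ioi 0, ‖phi β R x t‖) = psi β R := by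
      funext t
      rw [← phi_x_integral hβ1 hR0 t]
      apply setIntegral_congr_fun measurableSet_Ioi
      intro x hx
      exact Real.norm_of_nonneg (phi_nonneg (le_of_lt hx))
    rw [he]
    exact psi_integrable hR0

lemma KR_ae_eq {β R : ℝ} (hR : 1 ≤ R) :
    (fun x => ∫ t, phi β R x t) =ᵐ[volume.restrict (Ioi 0)] KR β R := by
  filter_upwards [self_mem_ae_restrict measurableSet_Ioi] with x hx
  exact (KR_eq (by linarith) hx).symm

lemma part2 {β R : ℝ} (hβ1 : β < 1) (hR : 1 ≤ R) :
    IntegrableOn (KR β R) (Ioi 0) :=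
  ((phi_prod_integrable hβ1 hR).integral_prod_left).congr (KR_ae_eq hR)

lemma int_KR_eq {β R : ℝ} (hβ1 : β < 1) (hR : 1 ≤ R) :
    ∫ x in Ioi 0, KR β R x = ∫ t, psi β R t := by
  have hR0 : (0:ℝ) < R := by linarith
  have h1 : ∫ x in Ioi 0, KR β R x = ∫ x in Ioi 0, ∫ t, phi β R x t :=
    (integral_congr_ae (KR_ae_eq hR)).symm
  rw [h1, MeasureTheory.integral_integral_swap (phi_prod_integrable hβ1 hR)]
  exact integral_congr_ae (ae_of_all _ fun t => phi_x_integral hβ1 hR0 t)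

section sums

variable {r : ℝ}

lemma rpow_ii (hr : -1 < r) (a b : ℝ) : IntervalIntegrable (fun x : ℝ => x ^ r) volume a b :=
  intervalIntegrable_rpow' hr

lemma const_int {c p h : ℝ} (hh : 0 ≤ h) : ∫ x in p..(p + h), (fun _ : ℝ => c) x = h * c := by
  rw [intervalIntegral.integral_const]
  simp

lemma step_le_anti (hr : -1 < r) (hr0 : r ≤ 0) {p h : ℝ} (hp : 0 ≤ p) (hh : 0 < h) :
    h * (p + h) ^ r ≤ ∫ x in p..(p + h), x ^ r := by
  have h1 : p ≤ p + h := by linarith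
  rw [intervalIntegral.integral_of_le h1, ← const_int (c := (p+h)^r) (p := p) hh.le,
    intervalIntegral.integral_of_le h1]
  apply setIntegral_mono_on
  · exact (integrableOn_const_iff).mpr (Or.inr (by rw [Real.volume_Ioc]; exact ENNReal.ofReal_lt_top))
  · exact (intervalIntegrable_iff_integrableOn_Ioc_of_le h1).mp (rpow_ii hr _ _)
  · exact measurableSet_Ioc
  · intro x hx
    exact Real.rpow_le_rpow_of_nonpos (lt_of_le_of_lt hp hx.1) hx.2 hr0

lemma int_le_step_anti (hr : -1 < r) (hr0 : r ≤ 0) {q h : ℝ} (hq : 0 < q) (hh : 0 < h) :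
    (∫ x in q..(q + h), x ^ r) ≤ h * q ^ r := by
  have h1 : q ≤ q + h := by linarith
  rw [intervalIntegral.integral_of_le h1, ← const_int (c := q^r) (p := q) hh.le,
    intervalIntegral.integral_of_le h1]
  apply setIntegral_mono_on
  · exact (intervalIntegrable_iff_integrableOn_Ioc_of_le h1).mp (rpow_ii hr _ _)
  · exact (integrableOn_const_iff).mpr (Or.inr (by rw [Real.volume_Ioc]; exact ENNReal.ofReal_lt_top))
  · exact measurableSet_Ioc
  · intro x hx
    exact Real.rpow_le_rpow_of_nonpos hq hx.1.le hr0

lemma int_le_step_mono (hr0 : 0 ≤ r) {p h : ℝ} (hp : 0 ≤ p) (hh : 0 < h) :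
    (∫ x in p..(p + h), x ^ r) ≤ h * (p + h) ^ r := by
  have h1 : p ≤ p + h := by linarith
  rw [intervalIntegral.integral_of_le h1, ← const_int (c := (p+h)^r) (p := p) hh.le,
    intervalIntegral.integral_of_le h1]
  apply setIntegral_mono_on
  · exact (intervalIntegrable_iff_integrableOn_Ioc_of_le h1).mp (rpow_ii (by linarith) _ _)
  · exact (integrableOn_const_iff).mpr (Or.inr (by rw [Real.volume_Ioc]; exact ENNReal.ofReal_lt_top))
  · exact measurableSet_Ioc
  · intro x hx
    exact Real.rpow_le_rpow (le_trans hp hx.1.le) hx.2 hr0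

lemma step_le_mono (hr0 : 0 ≤ r) {q h : ℝ} (hq : 0 ≤ q) (hh : 0 < h) :
    h * q ^ r ≤ ∫ x in q..(q + h), x ^ r := by
  have h1 : q ≤ q + h := by linarith
  rw [intervalIntegral.integral_of_le h1, ← const_int (c := q^r) (p := q) hh.le,
    intervalIntegral.integral_of_le h1]
  apply setIntegral_mono_on
  · exact (integrableOn_const_iff).mpr (Or.inr (by rw [Real.volume_Ioc]; exact ENNReal.ofReal_lt_top))
  · exact (intervalIntegrable_iff_integrableOn_Ioc_of_le h1).mp (rpow_ii (by linarith) _ _)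
  · exact measurableSet_Ioc
  · intro x hx
    exact Real.rpow_le_rpow hq hx.1.le hr0

noncomputable def SSum (r h : ℝ) (N : ℕ) : ℝ := ∑ c ∈ Finset.range N, h * (((c:ℝ) + 1) * h) ^ r

lemma SSum_nonneg {h : ℝ} (hh : 0 ≤ h) (N : ℕ) : 0 ≤ SSum r h N := by
  apply Finset.sum_nonneg
  intro c _
  have : (0:ℝ) ≤ ((c:ℝ) + 1) * h := by positivity
  positivity

lemma sum_adj (hr : -1 < r) (h : ℝ) (N : ℕ) :
    ∑ c ∈ Finset.range N, ∫ x in ((c:ℝ) * h)..(((c:ℝ) + 1) * h), x ^ r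
      = ∫ x in (0:ℝ)..((N:ℝ) * h), x ^ r := by
  have := intervalIntegral.sum_integral_adjacent_intervals
    (f := fun x : ℝ => x ^ r) (a := fun i : ℕ => (i:ℝ) * h) (μ := volume) (n := N)
    (fun i _ => rpow_ii hr _ _)
  simpa using this

lemma sum_adj' (hr : -1 < r) (h : ℝ) (N : ℕ) :
    ∑ c ∈ Finset.range N, ∫ x in (((c:ℝ) + 1) * h)..(((c:ℝ) + 2) * h), x ^ r
      = ∫ x in h..(((N:ℝ) + 1) * h), x ^ r := by
  have := intervalIntegral.sum_integral_adjacent_intervals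
    (f := fun x : ℝ => x ^ r) (a := fun i : ℕ => ((i:ℝ) + 1) * h) (μ := volume) (n := N)
    (fun i _ => rpow_ii hr _ _)
  push_cast at this
  rw [show ((0:ℝ) + 1) * h = h from by ring] at this
  rw [← this]
  apply Finset.sum_congr rfl
  intro c _
  congr 1
  ring

lemma SSum_le_anti (hr : -1 < r) (hr0 : r ≤ 0) {h : ℝ} (hh : 0 < h) (N : ℕ) :
    SSum r h N ≤ ∫ x in (0:ℝ)..((N:ℝ) * h), x ^ r := by
  rw [← sum_adj hr h N]
  apply Finset.sum_le_sum
  intro c _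
  have := step_le_anti hr hr0 (p := (c:ℝ) * h) (by positivity) hh
  have he : (c:ℝ) * h + h = ((c:ℝ) + 1) * h := by ring
  rw [he] at this
  exact this

lemma anti_le_SSum (hr : -1 < r) (hr0 : r ≤ 0) {h : ℝ} (hh : 0 < h) (N : ℕ) :
    (∫ x in h..(((N:ℝ) + 1) * h), x ^ r) ≤ SSum r h N := by
  rw [← sum_adj' hr h N]
  apply Finset.sum_le_sum
  intro c _
  have := int_le_step_anti hr hr0 (q := ((c:ℝ) + 1) * h) (by positivity) hh
  have he : ((c:ℝ) + 1) * h + h = ((c:ℝ) + 2) * h := by ring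
  rw [he] at this
  exact this

lemma mono_le_SSum (hr0 : 0 ≤ r) {h : ℝ} (hh : 0 < h) (N : ℕ) :
    (∫ x in (0:ℝ)..((N:ℝ) * h), x ^ r) ≤ SSum r h N := by
  rw [← sum_adj (by linarith) h N]
  apply Finset.sum_le_sum
  intro c _
  have := int_le_step_mono hr0 (p := (c:ℝ) * h) (by positivity) hh
  have he : (c:ℝ) * h + h = ((c:ℝ) + 1) * h := by ring
  rw [he] at this
  exact this

lemma SSum_le_mono (hr0 : 0 ≤ r) {h : ℝ} (hh : 0 < h) (N : ℕ) :
    SSum r h N ≤ ∫ x in h..(((N:ℝ) + 1) * h), x ^ r := by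
  rw [← sum_adj' (by linarith) h N]
  apply Finset.sum_le_sum
  intro c _
  have := step_le_mono hr0 (q := ((c:ℝ) + 1) * h) (by positivity) hh
  have he : ((c:ℝ) + 1) * h + h = ((c:ℝ) + 2) * h := by ring
  rw [he] at this
  exact this

lemma int_eval (hr : -1 < r) {b : ℝ} (hb : 0 ≤ b) :
    ∫ x in (0:ℝ)..b, x ^ r = b ^ (r + 1) / (r + 1) := by
  rw [integral_rpow (Or.inl hr), Real.zero_rpow (by linarith), sub_zero]

lemma int_eval' (hr : -1 < r) (a b : ℝ) :
    ∫ x in a..b, x ^ r = (b ^ (r + 1) - a ^ (r + 1)) / (r + 1) :=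
  integral_rpow (Or.inl hr)

end sums

section sums2

variable {r : ℝ}

lemma floor_mul_le {a h : ℝ} (ha : 0 ≤ a) (hh : 0 < h) : (⌊a / h⌋₊ : ℝ) * h ≤ a := by
  rw [← le_div_iff₀ hh]
  exact Nat.floor_le (by positivity)

lemma lt_succ_floor_mul {a h : ℝ} (hh : 0 < h) : a < ((⌊a / h⌋₊ : ℝ) + 1) * h := by
  rw [← div_lt_iff₀ hh]
  exact Nat.lt_floor_add_one _

lemma two_rpow_ge_one {s : ℝ} (hs : 0 ≤ s) : (1:ℝ) ≤ 2 ^ s := by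
  calc (1:ℝ) = 2 ^ (0:ℝ) := (Real.rpow_zero 2).symm
    _ ≤ 2 ^ s := Real.rpow_le_rpow_of_exponent_le one_le_two hs

lemma SSum_bound (hr : -1 < r) {h a : ℝ} (hh : 0 < h) (ha : 0 ≤ a) {N : ℕ}
    (hNa : (N:ℝ) * h ≤ a) :
    SSum r h N ≤ 2 ^ (r + 1) * a ^ (r + 1) / (r + 1) := by
  have hr1 : (0:ℝ) < r + 1 := by linarith
  have h2 : (1:ℝ) ≤ 2 ^ (r + 1) := two_rpow_ge_one hr1.le
  have hNh : (0:ℝ) ≤ (N:ℝ) * h := by positivity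
  rcases le_or_gt r 0 with hr0 | hr0
  · calc SSum r h N ≤ ∫ x in (0:ℝ)..((N:ℝ) * h), x ^ r := SSum_le_anti hr hr0 hh N
      _ = ((N:ℝ) * h) ^ (r + 1) / (r + 1) := int_eval hr hNh
      _ ≤ a ^ (r + 1) / (r + 1) := by
          apply div_le_div_of_nonneg_right ?_ hr1.le
          exact Real.rpow_le_rpow hNh hNa hr1.le
      _ ≤ 2 ^ (r + 1) * a ^ (r + 1) / (r + 1) := by
          have h3 : (0:ℝ) ≤ a ^ (r + 1) := Real.rpow_nonneg ha _
          apply div_le_div_of_nonneg_right ?_ hr1.le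
          nlinarith
  · rcases Nat.eq_zero_or_pos N with rfl | hN
    · have : SSum r h 0 = 0 := by simp [SSum]
      rw [this]
      have h3 : (0:ℝ) ≤ a ^ (r + 1) := Real.rpow_nonneg ha _
      positivity
    · have hN1 : (1:ℝ) ≤ (N:ℝ) := by exact_mod_cast hN
      have hha : h ≤ a := le_trans (by nlinarith) hNa
      have hNh1 : ((N:ℝ) + 1) * h ≤ 2 * a := by nlinarith
      calc SSum r h N ≤ ∫ x in h..(((N:ℝ) + 1) * h), x ^ r := SSum_le_mono hr0.le hh N
        _ = ((((N:ℝ) + 1) * h) ^ (r + 1) - h ^ (r + 1)) / (r + 1) := int_eval' hr _ _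
        _ ≤ (2 * a) ^ (r + 1) / (r + 1) := by
            apply div_le_div_of_nonneg_right ?_ hr1.le
            have h4 : (0:ℝ) ≤ h ^ (r + 1) := Real.rpow_nonneg hh.le _
            have h5 : (((N:ℝ) + 1) * h) ^ (r + 1) ≤ (2 * a) ^ (r + 1) :=
              Real.rpow_le_rpow (by positivity) hNh1 hr1.le
            linarith
        _ = 2 ^ (r + 1) * a ^ (r + 1) / (r + 1) := by
            rw [Real.mul_rpow (by norm_num) ha]

end sums2

section sums3

variable {r : ℝ}

lemma SSum_tendsto (hr : -1 < r) {a : ℝ} (ha : 0 < a) :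
    Tendsto (fun h : ℝ => SSum r h ⌊a / h⌋₊) (𝓝[>] 0) (𝓝 (a ^ (r + 1) / (r + 1))) := by
  have hr1 : (0:ℝ) < r + 1 := by linarith
  have hmem : Ioi (0:ℝ) ∈ 𝓝[>] (0:ℝ) := self_mem_nhdsWithin
  rcases le_or_gt r 0 with hr0 | hr0
  · -- decreasing integrand
    apply tendsto_of_tendsto_of_tendsto_of_le_of_le'
      (g := fun h : ℝ => (a ^ (r + 1) - h ^ (r + 1)) / (r + 1))
      (h := fun _ : ℝ => a ^ (r + 1) / (r + 1))
    · have h1 : Tendsto (fun h : ℝ => h ^ (r + 1)) (𝓝 (0:ℝ)) (𝓝 ((0:ℝ) ^ (r + 1))) :=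
        (Real.continuousAt_rpow_const 0 (r + 1) (Or.inr hr1.le)).tendsto
      rw [Real.zero_rpow hr1.ne'] at h1
      have h2 : Tendsto (fun h : ℝ => (a ^ (r + 1) - h ^ (r + 1)) / (r + 1)) (𝓝 (0:ℝ))
          (𝓝 ((a ^ (r + 1) - 0) / (r + 1))) := (tendsto_const_nhds.sub h1).div_const _
      rw [sub_zero] at h2
      exact h2.mono_left nhdsWithin_le_nhds
    · exact tendsto_const_nhds
    · filter_upwards [hmem] with h hh
      have hh : (0:ℝ) < h := hh
      have hfl : ((⌊a / h⌋₊:ℝ) + 1) * h ≥ a := (lt_succ_floor_mul hh).le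
      calc (a ^ (r + 1) - h ^ (r + 1)) / (r + 1)
          ≤ ((((⌊a / h⌋₊:ℝ) + 1) * h) ^ (r + 1) - h ^ (r + 1)) / (r + 1) := by
            apply div_le_div_of_nonneg_right ?_ hr1.le
            have := Real.rpow_le_rpow ha.le hfl hr1.le
            linarith
        _ = ∫ x in h..(((⌊a / h⌋₊:ℝ) + 1) * h), x ^ r := (int_eval' hr _ _).symm
        _ ≤ SSum r h ⌊a / h⌋₊ := anti_le_SSum hr hr0 hh _
    · filter_upwards [hmem] with h hh
      have hh : (0:ℝ) < h := hh
      calc SSum r h ⌊a / h⌋₊ ≤ ∫ x in (0:ℝ)..((⌊a / h⌋₊:ℝ) * h), x ^ r :=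
            SSum_le_anti hr hr0 hh _
        _ = ((⌊a / h⌋₊:ℝ) * h) ^ (r + 1) / (r + 1) := int_eval hr (by positivity)
        _ ≤ a ^ (r + 1) / (r + 1) := by
            apply div_le_div_of_nonneg_right ?_ hr1.le
            exact Real.rpow_le_rpow (by positivity) (floor_mul_le ha.le hh) hr1.le
  · -- increasing integrand
    have hmem2 : Ioo (0:ℝ) a ∈ 𝓝[>] (0:ℝ) := Ioo_mem_nhdsGT_of_mem ⟨le_refl 0, ha⟩
    have hca : ContinuousAt (fun y : ℝ => y ^ (r + 1)) a :=
      Real.continuousAt_rpow_const a (r + 1) (Or.inl ha.ne')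
    apply tendsto_of_tendsto_of_tendsto_of_le_of_le'
      (g := fun h : ℝ => (a - h) ^ (r + 1) / (r + 1))
      (h := fun h : ℝ => (a + h) ^ (r + 1) / (r + 1))
    · have h1 : Tendsto (fun h : ℝ => a - h) (𝓝 (0:ℝ)) (𝓝 a) := by
        have := (tendsto_const_nhds (x := a) (f := 𝓝 (0:ℝ))).sub tendsto_id
        simpa using this
      have h2 : Tendsto (fun h : ℝ => (a - h) ^ (r + 1) / (r + 1)) (𝓝 (0:ℝ))
          (𝓝 (a ^ (r + 1) / (r + 1))) := (hca.tendsto.comp h1).div_const (r + 1)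
      exact h2.mono_left nhdsWithin_le_nhds
    · have h1 : Tendsto (fun h : ℝ => a + h) (𝓝 (0:ℝ)) (𝓝 a) := by
        have := (tendsto_const_nhds (x := a) (f := 𝓝 (0:ℝ))).add tendsto_id
        simpa using this
      have h2 : Tendsto (fun h : ℝ => (a + h) ^ (r + 1) / (r + 1)) (𝓝 (0:ℝ))
          (𝓝 (a ^ (r + 1) / (r + 1))) := (hca.tendsto.comp h1).div_const (r + 1)
      exact h2.mono_left nhdsWithin_le_nhds
    · filter_upwards [hmem2] with h hh
      obtain ⟨hh0, hha⟩ := hh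
      have hfl : a - h ≤ (⌊a / h⌋₊:ℝ) * h := by
        have := lt_succ_floor_mul (a := a) hh0
        nlinarith
      calc (a - h) ^ (r + 1) / (r + 1)
          ≤ ((⌊a / h⌋₊:ℝ) * h) ^ (r + 1) / (r + 1) := by
            apply div_le_div_of_nonneg_right ?_ hr1.le
            exact Real.rpow_le_rpow (by linarith) hfl hr1.le
        _ = ∫ x in (0:ℝ)..((⌊a / h⌋₊:ℝ) * h), x ^ r := (int_eval hr (by positivity)).symm
        _ ≤ SSum r h ⌊a / h⌋₊ := mono_le_SSum hr0.le hh0 _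
    · filter_upwards [hmem2] with h hh
      obtain ⟨hh0, hha⟩ := hh
      have hfl : ((⌊a / h⌋₊:ℝ) + 1) * h ≤ a + h := by
        have := floor_mul_le ha.le hh0
        nlinarith
      calc SSum r h ⌊a / h⌋₊ ≤ ∫ x in h..(((⌊a / h⌋₊:ℝ) + 1) * h), x ^ r :=
            SSum_le_mono hr0.le hh0 _
        _ = ((((⌊a / h⌋₊:ℝ) + 1) * h) ^ (r + 1) - h ^ (r + 1)) / (r + 1) := int_eval' hr _ _
        _ ≤ (a + h) ^ (r + 1) / (r + 1) := by
            apply div_le_div_of_nonneg_right ?_ hr1.le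
            have h4 : (0:ℝ) ≤ h ^ (r + 1) := Real.rpow_nonneg hh0.le _
            have h5 := Real.rpow_le_rpow (by positivity) hfl hr1.le
            linarith

end sums3

lemma KR_zero {β R x : ℝ} (hR : 1 ≤ R) (hx : R ^ (-(1:ℝ)/2) < x) : KR β R x = 0 := by
  have hR0 : (0:ℝ) < R := by linarith
  have hx0 : 0 < x := lt_trans (Rhalf_pos hR) hx
  rw [KR_eq hR0 hx0]
  have hz : ∀ t : ℝ, phi β R x t = 0 := by
    intro t
    unfold phi
    rw [if_neg (by
      push_neg
      exact lt_of_le_of_lt (Af_le_Rhalf hR t) hx), mul_zero, mul_zero]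
  simp only [hz, integral_zero]

noncomputable def Gfun (β R v t : ℝ) : ℝ :=
  ∑ c ∈ Finset.range (⌊1 / Real.sqrt v⌋₊ + 1),
    Real.sqrt v * phi β R (((c:ℝ) + 1) * Real.sqrt v) t

lemma G_eq {β R : ℝ} (hR : 1 ≤ R) {v : ℝ} (hv : 0 < v) (t : ℝ) :
    Gfun β R v t = (t ^ 2 + 1) ^ (-β) * SSum (1 - 2*β) (Real.sqrt v) ⌊Af R t / Real.sqrt v⌋₊ := by
  have hR0 : (0:ℝ) < R := by linarith
  set h := Real.sqrt v with hdef
  have hh : 0 < h := Real.sqrt_pos.mpr hv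
  set K := ⌊Af R t / h⌋₊ with hK
  set M := ⌊1 / h⌋₊ + 1 with hM
  have hKM : K ≤ M := by
    rw [hK, hM]
    have : Af R t / h ≤ 1 / h :=
      div_le_div_of_nonneg_right (Af_le_one hR t) hh.le
    exact le_trans (Nat.floor_mono this) (Nat.le_succ _)
  have term_eq : ∀ c : ℕ, h * phi β R (((c:ℝ) + 1) * h) t
      = (t ^ 2 + 1) ^ (-β) * (if ((c:ℝ) + 1) * h ≤ Af R t then h * (((c:ℝ) + 1) * h) ^ (1 - 2*β) else 0) := by
    intro c
    unfold phi
    by_cases hc : ((c:ℝ) + 1) * h ≤ Af R t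
    · rw [if_pos hc, if_pos hc]; ring
    · rw [if_neg hc, if_neg hc]; ring
  unfold Gfun
  rw [← hdef, ← hM]
  rw [Finset.sum_congr rfl (fun c _ => term_eq c), ← Finset.mul_sum]
  congr 1
  have hsub : Finset.range K ⊆ Finset.range M := Finset.range_subset_range.mpr hKM
  have hvan : ∀ c ∈ Finset.range M, c ∉ Finset.range K →
      (if ((c:ℝ) + 1) * h ≤ Af R t then h * (((c:ℝ) + 1) * h) ^ (1 - 2*β) else 0) = 0 := by
    intro c _ hc
    rw [Finset.mem_range, not_lt] at hc
    apply if_neg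
    push_neg
    have h1 : Af R t < ((K:ℝ) + 1) * h := lt_succ_floor_mul hh
    have h2 : ((K:ℝ) + 1) * h ≤ ((c:ℝ) + 1) * h := by
      have : (K:ℝ) ≤ (c:ℝ) := by exact_mod_cast hc
      nlinarith
    linarith
  rw [← Finset.sum_subset hsub hvan]
  unfold SSum
  apply Finset.sum_congr rfl
  intro c hc
  rw [Finset.mem_range] at hc
  apply if_pos
  have h1 : ((c:ℝ) + 1) ≤ (K:ℝ) := by exact_mod_cast hc
  have h2 : (K:ℝ) * h ≤ Af R t := floor_mul_le (Af_pos hR0 t).le hh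
  nlinarith

lemma sum_eq_int {β R : ℝ} (hβ0 : 0 ≤ β) (hβ1 : β < 1) (hR : 1 ≤ R) {v : ℝ} (hv : 0 < v) :
    Real.sqrt v * ∑' c : ℕ, KR β R (((c:ℝ) + 1) * Real.sqrt v) = ∫ t, Gfun β R v t := by
  have hR0 : (0:ℝ) < R := by linarith
  set h := Real.sqrt v with hdef
  have hh : 0 < h := Real.sqrt_pos.mpr hv
  set M := ⌊1 / h⌋₊ + 1 with hM
  have hzero : ∀ c ∉ Finset.range M, KR β R (((c:ℝ) + 1) * h) = 0 := by
    intro c hc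
    rw [Finset.mem_range, not_lt] at hc
    have h1 : (1:ℝ) / h < (M:ℝ) := by
      rw [hM]; push_cast; exact Nat.lt_floor_add_one _
    have h2 : (M:ℝ) ≤ (c:ℝ) := by exact_mod_cast hc
    have h3 : (1:ℝ) < ((c:ℝ) + 1) * h := by
      rw [div_lt_iff₀ hh] at h1
      nlinarith
    exact KR_zero hR (lt_of_le_of_lt (Rhalf_le_one hR) h3)
  rw [tsum_eq_sum hzero, Finset.mul_sum]
  have hG : (fun t => Gfun β R v t)
      = fun t => ∑ c ∈ Finset.range M, h * phi β R (((c:ℝ) + 1) * h) t := by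
    funext t
    unfold Gfun
    rw [← hdef, ← hM]
  rw [hG, MeasureTheory.integral_finset_sum _
    (fun c _ => (phi_t_integrable hβ0 hR (by positivity)).const_mul h)]
  apply Finset.sum_congr rfl
  intro c _
  rw [MeasureTheory.integral_const_mul, ← KR_eq hR0 (by positivity)]

lemma sqrt_tendsto : Tendsto Real.sqrt (𝓝[>] (0:ℝ)) (𝓝[>] (0:ℝ)) := by
  apply tendsto_nhdsWithin_of_tendsto_nhds_of_eventually_within
  · have : Tendsto Real.sqrt (𝓝 (0:ℝ)) (𝓝 (Real.sqrt 0)) :=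
      Real.continuous_sqrt.continuousAt.tendsto
    rw [Real.sqrt_zero] at this
    exact this.mono_left nhdsWithin_le_nhds
  · filter_upwards [self_mem_nhdsWithin] with v hv
    exact Real.sqrt_pos.mpr hv

lemma G_tendsto {β R : ℝ} (hβ0 : 0 ≤ β) (hβ1 : β < 1) (hR : 1 ≤ R) :
    Tendsto (fun v => ∫ t, Gfun β R v t) (𝓝[>] (0:ℝ)) (𝓝 (∫ t, psi β R t)) := by
  have hR0 : (0:ℝ) < R := by linarith
  have hr : (-1:ℝ) < 1 - 2*β := by linarith
  have hr1 : (0:ℝ) < (1 - 2*β) + 1 := by linarith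
  apply MeasureTheory.tendsto_integral_filter_of_dominated_convergence
    (bound := fun t => (2 ^ (2 - 2*β) * R ^ (β - 1) / (2 - 2*β)) * (t ^ 2 + 1)⁻¹)
  · filter_upwards [self_mem_nhdsWithin] with v hv
    apply Measurable.aestronglyMeasurable
    apply Finset.measurable_sum
    intro c _
    exact (phi_t_meas hR0 _).const_mul _
  · filter_upwards [self_mem_nhdsWithin] with v hv
    apply ae_of_all
    intro t
    have hv : (0:ℝ) < v := hv
    have hh : 0 < Real.sqrt v := Real.sqrt_pos.mpr hv
    have hGnn : 0 ≤ Gfun β R v t := by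
      apply Finset.sum_nonneg
      intro c _
      exact mul_nonneg hh.le (phi_nonneg (by positivity))
    rw [Real.norm_of_nonneg hGnn, G_eq hR hv t]
    have hb := SSum_bound hr (h := Real.sqrt v) (a := Af R t) hh (Af_pos hR0 t).le
      (floor_mul_le (Af_pos hR0 t).le hh)
    have hw : (0:ℝ) ≤ (t ^ 2 + 1) ^ (-β) := Real.rpow_nonneg (sq1_pos t).le _
    calc (t ^ 2 + 1) ^ (-β) * SSum (1 - 2*β) (Real.sqrt v) ⌊Af R t / Real.sqrt v⌋₊
        ≤ (t ^ 2 + 1) ^ (-β) * (2 ^ ((1 - 2*β) + 1) * (Af R t) ^ ((1 - 2*β) + 1) / ((1 - 2*β) + 1)) :=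
          mul_le_mul_of_nonneg_left hb hw
      _ = (2 ^ (2 - 2*β) * R ^ (β - 1) / (2 - 2*β)) * (t ^ 2 + 1)⁻¹ := by
          rw [show (1 - 2*β) + 1 = 2 - 2*β by ring]
          calc (t ^ 2 + 1) ^ (-β) * (2 ^ (2 - 2*β) * (Af R t) ^ (2 - 2*β) / (2 - 2*β))
              = (2 ^ (2 - 2*β) / (2 - 2*β)) * ((t ^ 2 + 1) ^ (-β) * (Af R t) ^ (2 - 2*β)) := by
                ring
            _ = (2 ^ (2 - 2*β) / (2 - 2*β)) * (R ^ (β - 1) * (t ^ 2 + 1)⁻¹) := by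
                rw [alg hR0 t]
            _ = (2 ^ (2 - 2*β) * R ^ (β - 1) / (2 - 2*β)) * (t ^ 2 + 1)⁻¹ := by ring
  · apply Integrable.const_mul
    apply integrable_inv_one_add_sq.congr
    filter_upwards with t
    rw [add_comm]
  · apply ae_of_all
    intro t
    have heq : (fun v => Gfun β R v t)
        =ᶠ[𝓝[>] (0:ℝ)] fun v => (t ^ 2 + 1) ^ (-β) * SSum (1 - 2*β) (Real.sqrt v) ⌊Af R t / Real.sqrt v⌋₊ := by
      filter_upwards [self_mem_nhdsWithin] with v hv
      exact G_eq hR hv t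
    rw [tendsto_congr' heq]
    have h1 := (SSum_tendsto hr (Af_pos hR0 t)).comp sqrt_tendsto
    have h2 : Tendsto (fun v => (t ^ 2 + 1) ^ (-β) * SSum (1 - 2*β) (Real.sqrt v) ⌊Af R t / Real.sqrt v⌋₊)
        (𝓝[>] (0:ℝ))
        (𝓝 ((t ^ 2 + 1) ^ (-β) * ((Af R t) ^ ((1 - 2*β) + 1) / ((1 - 2*β) + 1)))) :=
      h1.const_mul _
    have h3 : (t ^ 2 + 1) ^ (-β) * ((Af R t) ^ ((1 - 2*β) + 1) / ((1 - 2*β) + 1)) = psi β R t := by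
      unfold psi
      rw [show (1 - 2*β) + 1 = 2 - 2*β by ring]
    rw [h3] at h2
    exact h2

end RSKR

open RSKR in
/-- For `0 ≤ β < 1` and `R ≥ 1`: `K_R` vanishes beyond `R^{−1/2}`, is integrable on `(0,∞)`,
and `v^{1/2} Σ_{c≥1} K_R(c v^{1/2}) → ∫_0^∞ K_R(x) dx` as `v → 0⁺`. -/
theorem riemann_sum_KR
    (β R : ℝ) (hβ0 : 0 ≤ β) (hβ1 : β < 1) (hR : 1 ≤ R) :
    (∀ x : ℝ, R ^ (-(1 : ℝ)/2) < x → KR β R x = 0) ∧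
    IntegrableOn (KR β R) (Set.Ioi 0) ∧
    Tendsto (fun v : ℝ => Real.sqrt v * ∑' c : ℕ, KR β R (((c : ℝ) + 1) * Real.sqrt v))
      (𝓝[>] (0 : ℝ)) (𝓝 (∫ x in Set.Ioi (0 : ℝ), KR β R x)) := by
  refine ⟨fun x hx => KR_zero hR hx, part2 hβ1 hR, ?_⟩
  rw [int_KR_eq hβ1 hR]
  have hlim := G_tendsto hβ0 hβ1 hR
  apply hlim.congr'
  filter_upwards [self_mem_nhdsWithin] with v hv
  exact (sum_eq_int hβ0 hβ1 hR hv).symm
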